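/- arXiv:2208.14894 — 4 statements merged into one kernel-verified Lean document; each statement's English description precedes it below -/
import Mathlib

section
/- If G is a finite graph with an independent set I intersecting every maximum clique, and the induced subgraph G[V−I] satisfies ω(G[V−I]) = χ(G[V−I]), then ω(G) = χ(G). -/
open SimpleGraph Finset

variable {V : Type} [Fintype V] [DecidableEq V]

/-- `s` is an independent set of `G`: pairwise non-adjacent vertices. -/
def IsIndepSet' (G : SimpleGraph V) (s : Set V) : Prop :=
  s.Pairwise fun a b => ¬ G.Adj a b

/-- The clique number of the subgraph of `G` induced on the vertex set `s`. -/
noncomputable def cliqueNumOn (G : SimpleGraph V) (s : Finset V) : ℕ :=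
  sSup {n | ∃ t : Finset V, t ⊆ s ∧ G.IsClique ↑t ∧ t.card = n}

/-- The independence number of the subgraph of `G` induced on the vertex set `s`. -/
noncomputable def indepNumOn (G : SimpleGraph V) (s : Finset V) : ℕ :=
  sSup {n | ∃ t : Finset V, t ⊆ s ∧ IsIndepSet' G ↑t ∧ t.card = n}

/-- `t` is a maximum clique of the subgraph of `G` induced on `s`. -/
def IsMaxCliqueOn (G : SimpleGraph V) (s t : Finset V) : Prop :=
  t ⊆ s ∧ G.IsClique ↑t ∧ t.card = cliqueNumOn G s

/-- `t` is a maximum independent set of the subgraph of `G` induced on `s`. -/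
def IsMaxIndepOn (G : SimpleGraph V) (s t : Finset V) : Prop :=
  t ⊆ s ∧ IsIndepSet' G ↑t ∧ t.card = indepNumOn G s

omit [Fintype V] [DecidableEq V] in
lemma cliqueSet_bdd (G : SimpleGraph V) (s : Finset V) :
    BddAbove {n | ∃ t : Finset V, t ⊆ s ∧ G.IsClique ↑t ∧ t.card = n} :=
  ⟨s.card, fun _ ⟨_, ht, _, hc⟩ => hc ▸ Finset.card_le_card ht⟩

lemma exists_max_clique (G : SimpleGraph V) (s : Finset V) :
    ∃ t, IsMaxCliqueOn G s t := by
  have h0 : (0:ℕ) ∈ {n | ∃ t : Finset V, t ⊆ s ∧ G.IsClique ↑t ∧ t.card = n} :=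
    ⟨∅, by simp, by simp, rfl⟩
  obtain ⟨t, h1, h2, h3⟩ := Nat.sSup_mem ⟨0, h0⟩ (cliqueSet_bdd G s)
  exact ⟨t, h1, h2, h3⟩

lemma card_le_cliqueNumOn {G : SimpleGraph V} {s t : Finset V}
    (h1 : t ⊆ s) (h2 : G.IsClique ↑t) : t.card ≤ cliqueNumOn G s :=
  le_csSup (cliqueSet_bdd G s) ⟨t, h1, h2, rfl⟩

theorem stmt_2 (G : SimpleGraph V) (I : Finset V)
    (hind : IsIndepSet' G ↑I)
    (hint : ∀ t, IsMaxCliqueOn G Finset.univ t → (I ∩ t).Nonempty)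
    (hsub : (cliqueNumOn G (Finset.univ \ I) : ℕ∞)
      = (G.induce ((↑I : Set V)ᶜ)).chromaticNumber) :
    (cliqueNumOn G Finset.univ : ℕ∞) = G.chromaticNumber := by
  set n := cliqueNumOn G (Finset.univ \ I) with hn
  set ω := cliqueNumOn G Finset.univ with hω
  -- ω = n + 1
  have hle1 : ω ≤ n + 1 := by
    obtain ⟨t, ht⟩ := exists_max_clique G (Finset.univ : Finset V)
    obtain ⟨v, hv⟩ := hint t ht
    rw [Finset.mem_inter] at hv
    have hsubt : t.erase v ⊆ Finset.univ \ I := by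
      intro x hx
      rw [Finset.mem_erase] at hx
      rw [Finset.mem_sdiff]
      refine ⟨Finset.mem_univ _, fun hxI => ?_⟩
      exact hind (by simpa using hxI) (by simpa using hv.1) hx.1
        (ht.2.1 (by simpa using hx.2) (by simpa using hv.2) hx.1)
    have hcl : G.IsClique ↑(t.erase v) := ht.2.1.subset (by simp [Finset.coe_subset])
    have := card_le_cliqueNumOn hsubt hcl
    rw [Finset.card_erase_of_mem hv.2, ht.2.2] at this
    omega
  have hle2 : n + 1 ≤ ω := by
    obtain ⟨u, hu⟩ := exists_max_clique G (Finset.univ \ I)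
    have hnle : n ≤ ω := by
      have := card_le_cliqueNumOn (Finset.subset_univ u) hu.2.1
      rwa [hu.2.2] at this
    rcases eq_or_lt_of_le hnle with heq | hlt
    · exfalso
      obtain ⟨v, hv⟩ := hint u ⟨Finset.subset_univ u, hu.2.1, hu.2.2.trans heq⟩
      rw [Finset.mem_inter] at hv
      have := hu.1 hv.2
      rw [Finset.mem_sdiff] at this
      exact this.2 hv.1
    · omega
  have hωn : ω = n + 1 := le_antisymm hle1 hle2
  -- colorability with n+1 colors
  have hcol : (G.induce ((↑I : Set V)ᶜ)).Colorable n :=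
    chromaticNumber_le_iff_colorable.mp (le_of_eq hsub.symm)
  obtain ⟨C⟩ := hcol
  have hGcol : G.Colorable (n + 1) := by
    refine ⟨⟨fun v => if h : v ∈ I then Fin.last n
        else (C ⟨v, by simpa using h⟩).castSucc, ?_⟩⟩
    intro a b hab
    by_cases ha : a ∈ I <;> by_cases hb : b ∈ I
    · exact absurd hab (hind (by simpa using ha) (by simpa using hb) (G.ne_of_adj hab))
    · simp only [dif_pos ha, dif_neg hb]
      exact (Fin.castSucc_lt_last _).ne'
    · simp only [dif_neg ha, dif_pos hb]
      exact (Fin.castSucc_lt_last _).ne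
    · simp only [dif_neg ha, dif_neg hb]
      intro h
      exact C.valid (by exact hab) (Fin.castSucc_injective _ h)
  have h1 : G.chromaticNumber ≤ ((n + 1 : ℕ) : ℕ∞) :=
    chromaticNumber_le_iff_colorable.mpr hGcol
  obtain ⟨t, ht⟩ := exists_max_clique G (Finset.univ : Finset V)
  have h2 : (ω : ℕ∞) ≤ G.chromaticNumber := by
    have := ht.2.1.card_le_chromaticNumber
    rwa [ht.2.2] at this
  refine le_antisymm h2 ?_
  calc G.chromaticNumber ≤ ((n + 1 : ℕ) : ℕ∞) := h1
    _ = (ω : ℕ∞) := by rw [hωn]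
end

section
/- Every perfect graph is quasiperfect. -/
open SimpleGraph Finset

variable {V : Type} [Fintype V] [DecidableEq V]

/-- Quasiperfectness of the subgraph of `G` induced on the vertex set `s`,
defined inductively on the number of vertices: the empty graph is quasiperfect,
and a nonempty graph is quasiperfect iff it has a prime independent set `PI`
and a prime clique `PK` whose removals leave quasiperfect graphs. -/
inductive QP (G : SimpleGraph V) : Finset V → Prop
  | empty : QP G ∅
  | step (s PI PK : Finset V) (hs : s.Nonempty)
      (hPIsub : PI ⊆ s) (hPIind : IsIndepSet' G ↑PI)
      (hPIint : ∀ t, IsMaxCliqueOn G s t → (PI ∩ t).Nonempty)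
      (hPIcov : ∀ v ∈ PI, ∃ t, IsMaxCliqueOn G s t ∧ v ∈ t)
      (hPKsub : PK ⊆ s) (hPKclq : G.IsClique ↑PK)
      (hPKint : ∀ t, IsMaxIndepOn G s t → (PK ∩ t).Nonempty)
      (hPKcov : ∀ v ∈ PK, ∃ t, IsMaxIndepOn G s t ∧ v ∈ t)
      (hrec1 : QP G (s \ PI)) (hrec2 : QP G (s \ PK)) : QP G s

/-- A graph is quasiperfect if its full vertex set is. -/
def Quasiperfect (G : SimpleGraph V) : Prop := QP G Finset.univ

/-- `G` is perfect: every induced subgraph has clique number equal to chromatic number. -/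
def Perfect' (G : SimpleGraph V) : Prop :=
  ∀ s : Finset V, (cliqueNumOn G s : ℕ∞) = (G.induce (↑s : Set V)).chromaticNumber

/-!
Every induced subgraph of a perfect graph has an `ω`-colouring, and in such a colouring every
maximum clique meets every colour class; so colour class `0`, cut down to the vertices lying in
maximum cliques, is a prime independent set. The prime clique arises in the same way from
`ω`-colourings of the complement, i.e. from Lovász's weak perfect graph theorem, which follows from
Gasparian's rank argument. Let `s` be minimal such that `Gᶜ` has no `ω(Gᶜ[s])`-colouring on `s`,
and put `a = ω(G[s])`, `w = ω(Gᶜ[s])`. A maximum clique `S₀` of `G[s]` together with the colour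
classes of `w`-colourings of `Gᶜ[s - u]`, `u ∈ S₀`, gives `a * w + 1` cliques `Aᵢ` of `G`; by
minimality each `Aᵢ` misses some maximum independent set `Bᵢ`, and `|Aᵢ ∩ Bⱼ| = [i ≠ j]`. The
incidence vectors of the `Aᵢ` are then linearly independent, so `a * w + 1 ≤ |s|`, whereas an
`a`-colouring of `G[s]` into independent sets of size at most `w` gives `|s| ≤ a * w`.
-/

open Matrix in
theorem card_le_card_of_dotProduct_eq_ite {ι α K : Type*} [Fintype ι] [Fintype α]
    [DecidableEq ι] [Nontrivial ι] [Field K] [CharZero K] (v w : ι → α → K)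
    (h : ∀ i j, v i ⬝ᵥ w j = if i = j then 0 else 1) :
    Fintype.card ι ≤ Fintype.card α := by
  have hv : LinearIndependent K v := by
    rw [Fintype.linearIndependent_iff]
    intro g hg
    have hconst : ∀ j, g j = ∑ i, g i := by
      intro j
      have hj := congrArg (· ⬝ᵥ w j) hg
      simp only [sum_dotProduct, smul_dotProduct, h, smul_eq_mul, mul_ite, mul_zero, mul_one,
        zero_dotProduct, sum_ite, sum_const_zero, zero_add, filter_ne'] at hj
      rw [← sum_erase_add _ _ (mem_univ j), hj, zero_add]
    have hzero : ∑ i, g i = 0 := by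
      have hsum : ((Fintype.card ι : K) - 1) * ∑ i, g i = 0 := by
        rw [sub_mul, one_mul, sub_eq_zero]
        conv_rhs => rw [Finset.sum_congr rfl fun i _ => hconst i]
        simp
      refine (mul_eq_zero.mp hsum).resolve_left ?_
      exact sub_ne_zero.mpr (by exact_mod_cast Fintype.one_lt_card.ne')
    intro i
    rw [hconst i, hzero]
  simpa using hv.fintype_card_le_finrank

open Matrix in
theorem card_le_card_of_card_inter_eq_ite {ι α : Type*} [Fintype ι] [DecidableEq ι]
    [Nontrivial ι] [DecidableEq α] (s : Finset α) (A B : ι → Finset α) (hA : ∀ i, A i ⊆ s)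
    (h : ∀ i j, #(A i ∩ B j) = if i = j then 0 else 1) : Fintype.card ι ≤ #s := by
  let χ (P : Finset α) (x : s) : ℚ := if ↑x ∈ P then 1 else 0
  have hχ : ∀ i j, χ (A i) ⬝ᵥ χ (B j) = #(A i ∩ B j) := by
    intro i j
    rw [dotProduct, sum_coe_sort s (fun x => (if x ∈ A i then 1 else 0) * if x ∈ B j then 1 else 0)]
    simp only [boole_mul, ← ite_and, ← mem_inter, sum_boole]
    rw [filter_mem_eq_inter, inter_eq_right.mpr (inter_subset_left.trans (hA i))]
  simpa using card_le_card_of_dotProduct_eq_ite (K := ℚ) (fun i => χ (A i)) (fun j => χ (B j))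
    fun i j => by rw [hχ, h]; split_ifs <;> simp

section CliqueNumber

variable {α : Type} (G : SimpleGraph α) (s : Finset α)

lemma bddAbove_cliqueCards :
    BddAbove {n | ∃ t : Finset α, t ⊆ s ∧ G.IsClique ↑t ∧ t.card = n} :=
  ⟨#s, by rintro _ ⟨t, hts, -, rfl⟩; exact card_le_card hts⟩

lemma exists_isMaxCliqueOn : ∃ t, IsMaxCliqueOn G s t := by
  obtain ⟨t, hts, ht, hcard⟩ : cliqueNumOn G s ∈ _ :=
    Nat.sSup_mem ⟨0, ∅, empty_subset s, by simp, card_empty⟩ (bddAbove_cliqueCards G s)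
  exact ⟨t, hts, ht, hcard⟩

variable {G s}

lemma card_le_cliqueNumOn_s9 {t : Finset α} (hts : t ⊆ s) (ht : G.IsClique ↑t) :
    #t ≤ cliqueNumOn G s :=
  le_csSup (bddAbove_cliqueCards G s) ⟨t, hts, ht, rfl⟩

lemma cliqueNumOn_mono {s' : Finset α} (h : s' ⊆ s) : cliqueNumOn G s' ≤ cliqueNumOn G s := by
  obtain ⟨t, hts, ht, hcard⟩ := exists_isMaxCliqueOn G s'
  exact hcard ▸ card_le_cliqueNumOn_s9 (hts.trans h) ht

lemma cliqueNumOn_pos (hs : s.Nonempty) : 0 < cliqueNumOn G s := by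
  obtain ⟨v, hv⟩ := hs
  simpa [Nat.one_le_iff_ne_zero, Nat.pos_iff_ne_zero] using
    card_le_cliqueNumOn_s9 (G := G) (singleton_subset_iff.mpr hv) (by simp)

lemma card_inter_le_one_of_isClique_compl [DecidableEq α] {P K : Finset α}
    (hP : G.IsClique ↑P) (hK : Gᶜ.IsClique ↑K) : #(P ∩ K) ≤ 1 :=
  card_le_one.mpr fun x hx y hy => by
    by_contra hne
    simp only [mem_inter] at hx hy
    exact (hK hx.2 hy.2 hne).2 (hP hx.1 hy.1 hne)

lemma indepNumOn_eq_cliqueNumOn_compl : indepNumOn G s = cliqueNumOn Gᶜ s := by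
  simp only [indepNumOn, cliqueNumOn, G.isClique_compl]
  rfl

lemma isMaxCliqueOn_compl_iff {t : Finset α} : IsMaxCliqueOn Gᶜ s t ↔ IsMaxIndepOn G s t := by
  rw [IsMaxCliqueOn, IsMaxIndepOn, G.isClique_compl, indepNumOn_eq_cliqueNumOn_compl]
  rfl

end CliqueNumber

section Coloring

variable {α : Type} (H : SimpleGraph α)

def IsColoringOn (s : Finset α) (m : ℕ) (f : α → ℕ) : Prop :=
  (∀ v ∈ s, f v < m) ∧ ∀ v ∈ s, ∀ w ∈ s, H.Adj v w → f v ≠ f w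

def ColorableOn (s : Finset α) (m : ℕ) : Prop :=
  ∃ f, IsColoringOn H s m f

variable {H} {s t K : Finset α} {m m' : ℕ} {f : α → ℕ}

lemma ColorableOn.mono (h : ColorableOn H s m) (hts : t ⊆ s) (hm : m ≤ m') :
    ColorableOn H t m' :=
  let ⟨f, hlt, hf⟩ := h
  ⟨f, fun v hv => (hlt v (hts hv)).trans_le hm, fun v hv w hw => hf v (hts hv) w (hts hw)⟩

lemma colorableOn_empty : ColorableOn H ∅ m :=
  ⟨fun _ => 0, by simp, by simp⟩

lemma ColorableOn.of_sdiff_of_isIndepSet [DecidableEq α] {S : Finset α}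
    (h : ColorableOn H (s \ S) m) (hS : H.IsIndepSet ↑S) : ColorableOn H s (m + 1) := by
  obtain ⟨f, hlt, hf⟩ := h
  have hsdiff {v} (hv : v ∈ s) (hvS : v ∉ S) : v ∈ s \ S := mem_sdiff.mpr ⟨hv, hvS⟩
  refine ⟨fun v => if v ∈ S then m else f v, fun v hv => ?_, fun v hv w hw hvw => ?_⟩
  · by_cases hvS : v ∈ S <;> simp only [hvS, if_true, if_false]
    · exact m.lt_succ_self
    · exact (hlt v (hsdiff hv hvS)).trans m.lt_succ_self
  · by_cases hvS : v ∈ S <;> by_cases hwS : w ∈ S <;> simp only [hvS, hwS, if_true, if_false]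
    · exact absurd hvw (hS hvS hwS hvw.ne)
    · exact (hlt w (hsdiff hw hwS)).ne'
    · exact (hlt v (hsdiff hv hvS)).ne
    · exact hf v (hsdiff hv hvS) w (hsdiff hw hwS) hvw

lemma IsColoringOn.injOn (hf : IsColoringOn H s m f) (hK : K ⊆ s) (hKc : H.IsClique ↑K) :
    Set.InjOn f ↑K := fun x hx y hy hxy => by
  by_contra hne
  exact hf.2 x (hK hx) y (hK hy) (hKc hx hy hne) hxy

lemma IsColoringOn.isIndepSet_colorClass (hf : IsColoringOn H s m f) (k : ℕ) :
    H.IsIndepSet ↑{v ∈ s | f v = k} := fun x hx y hy _ hxy => by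
  simp only [coe_filter, Set.mem_ofPred_eq] at hx hy
  exact hf.2 x hx.1 y hy.1 hxy (hx.2.trans hy.2.symm)

lemma IsColoringOn.card_le_mul (hf : IsColoringOn H s m f) : #s ≤ m * cliqueNumOn Hᶜ s := by
  rw [mul_comm, ← card_range m]
  refine card_le_mul_card_image_of_maps_to (fun v hv => mem_range.mpr (hf.1 v hv)) _
    fun k _ => card_le_cliqueNumOn_s9 (filter_subset _ s) ?_
  exact (H.isClique_compl).mpr (hf.isIndepSet_colorClass k)

lemma Perfect'.colorableOn {G : SimpleGraph α} (h : Perfect' G) (s : Finset α) :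
    ColorableOn G s (cliqueNumOn G s) := by
  classical
  have hcol : (G.induce (↑s : Set α)).Colorable (cliqueNumOn G s) := by
    rw [← chromaticNumber_le_iff_colorable, ← h s]
  obtain ⟨C⟩ := hcol
  refine ⟨fun v => if hv : v ∈ s then C ⟨v, hv⟩ else 0, fun v hv => ?_, fun v hv w hw hvw => ?_⟩
  · simp only [dif_pos hv, Fin.is_lt]
  · simp only [dif_pos hv, dif_pos hw, ne_eq, Fin.val_inj]
    exact C.valid (by simpa using hvw)

lemma IsMaxCliqueOn.exists_color_eq {G : SimpleGraph α} {k : ℕ}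
    (ht : IsMaxCliqueOn G s t) (hf : IsColoringOn G s (cliqueNumOn G s) f)
    (hk : k < cliqueNumOn G s) : ∃ v ∈ t, f v = k := by
  obtain ⟨hts, htc, hcard⟩ := ht
  have hmaps : Set.MapsTo f ↑t ↑(range (cliqueNumOn G s)) :=
    fun v hv => mem_range.mpr (hf.1 v (hts hv))
  exact surjOn_of_injOn_of_card_le f hmaps (hf.injOn hts htc) (by simp [hcard])
    (mem_range.mpr hk)

end Coloring

section PrimeIndepSet

variable {α : Type} [DecidableEq α] {G : SimpleGraph α} {s P : Finset α}

def IsPrimeIndepOn (G : SimpleGraph α) (s P : Finset α) : Prop :=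
  P ⊆ s ∧ G.IsIndepSet ↑P ∧ (∀ t, IsMaxCliqueOn G s t → (P ∩ t).Nonempty) ∧
    ∀ v ∈ P, ∃ t, IsMaxCliqueOn G s t ∧ v ∈ t

lemma IsPrimeIndepOn.nonempty (hP : IsPrimeIndepOn G s P) : P.Nonempty := by
  obtain ⟨t, ht⟩ := exists_isMaxCliqueOn G s
  exact (hP.2.2.1 t ht).mono inter_subset_left

lemma ColorableOn.exists_isPrimeIndepOn (h : ColorableOn G s (cliqueNumOn G s))
    (hs : s.Nonempty) : ∃ P, IsPrimeIndepOn G s P := by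
  classical
  obtain ⟨f, hf⟩ := h
  refine ⟨{v ∈ s | f v = 0 ∧ ∃ t, IsMaxCliqueOn G s t ∧ v ∈ t}, filter_subset _ s,
    ?_, fun t ht => ?_, fun v hv => (mem_filter.mp hv).2.2⟩
  · exact (hf.isIndepSet_colorClass 0).mono fun v hv => by
      simp only [coe_filter, Set.mem_ofPred_eq] at hv ⊢
      exact ⟨hv.1, hv.2.1⟩
  · obtain ⟨v, hvt, hv0⟩ := ht.exists_color_eq hf (cliqueNumOn_pos hs)
    exact ⟨v, mem_inter.mpr ⟨mem_filter.mpr ⟨ht.1 hvt, hv0, t, ht, hvt⟩, hvt⟩⟩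

end PrimeIndepSet

section Gasparian

variable {α : Type} [DecidableEq α] {G : SimpleGraph α} {s : Finset α}

lemma exists_isMaxCliqueOn_compl_disjoint (hbad : ¬ ColorableOn Gᶜ s (cliqueNumOn Gᶜ s))
    (hmin : ∀ t ⊂ s, ColorableOn Gᶜ t (cliqueNumOn Gᶜ t)) {S : Finset α} (hSs : S ⊆ s)
    (hS : G.IsClique ↑S) : ∃ B, IsMaxCliqueOn Gᶜ s B ∧ Disjoint S B := by
  have hsdiff : cliqueNumOn Gᶜ (s \ S) = cliqueNumOn Gᶜ s := by
    refine le_antisymm (cliqueNumOn_mono sdiff_subset) (not_lt.mp fun hlt => hbad ?_)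
    rcases S.eq_empty_or_nonempty with rfl | hSne
    · simp at hlt
    exact ((hmin _ (sdiff_ssubset hSs hSne)).of_sdiff_of_isIndepSet
      ((G.isIndepSet_compl).mpr hS)).mono subset_rfl hlt
  obtain ⟨B, hB, hBc, hBcard⟩ := exists_isMaxCliqueOn Gᶜ (s \ S)
  exact ⟨B, ⟨hB.trans sdiff_subset, hBc, hBcard.trans hsdiff⟩,
    disjoint_comm.mp (subset_sdiff.mp hB).2⟩

/-- Gasparian's `#S₀ * w + 1` cliques of `G`, when `S₀` is a clique of `G` and each `F u` is a
`w`-colouring of `Gᶜ` on `s.erase u`. -/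
def cliqueFamily (S₀ s : Finset α) (w : ℕ) (F : α → α → ℕ) : Option (S₀ × Fin w) → Finset α
  | none => S₀
  | some (u, k) => {v ∈ s.erase u | F u v = k}

variable {S₀ K : Finset α} {w : ℕ} {F : α → α → ℕ}

lemma cliqueFamily_subset (hS₀ : S₀ ⊆ s) (i : Option (S₀ × Fin w)) :
    cliqueFamily S₀ s w F i ⊆ s := by
  rcases i with _ | ⟨u, k⟩
  · exact hS₀
  · exact (filter_subset _ _).trans (erase_subset _ _)

lemma isClique_cliqueFamily (hS₀ : G.IsClique ↑S₀)
    (hF : ∀ u ∈ S₀, IsColoringOn Gᶜ (s.erase u) w (F u)) (i : Option (S₀ × Fin w)) :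
    G.IsClique ↑(cliqueFamily S₀ s w F i) := by
  rcases i with _ | ⟨u, k⟩
  · exact hS₀
  · exact (G.isIndepSet_compl).mp ((hF u u.2).isIndepSet_colorClass k)

lemma cliqueFamily_inter_nonempty_of_notMem
    (hF : ∀ u ∈ S₀, IsColoringOn Gᶜ (s.erase u) w (F u)) (hK : K ⊆ s) (hKc : Gᶜ.IsClique ↑K)
    (hKw : #K = w) {u : S₀} (hu : ↑u ∉ K) (k : Fin w) :
    (cliqueFamily S₀ s w F (some (u, k)) ∩ K).Nonempty := by
  have hKu : K ⊆ s.erase u := subset_erase.mpr ⟨hK, hu⟩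
  have hmaps : Set.MapsTo (F u) ↑K ↑(range w) :=
    fun v hv => mem_range.mpr ((hF u u.2).1 v (hKu hv))
  obtain ⟨v, hvK, hvk⟩ := surjOn_of_injOn_of_card_le (F u) hmaps ((hF u u.2).injOn hKu hKc)
    (by simp [hKw]) (mem_range.mpr k.isLt)
  exact ⟨v, mem_inter.mpr ⟨mem_filter.mpr ⟨hKu hvK, hvk⟩, hvK⟩⟩

lemma cliqueFamily_inter_nonempty_of_mem
    (hF : ∀ u ∈ S₀, IsColoringOn Gᶜ (s.erase u) w (F u)) (hK : K ⊆ s) (hKc : Gᶜ.IsClique ↑K)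
    (hKw : #K = w) {u : S₀} (hu : ↑u ∈ K) {k k' : Fin w} (hkk' : k ≠ k')
    (hk : Disjoint (cliqueFamily S₀ s w F (some (u, k))) K) :
    (cliqueFamily S₀ s w F (some (u, k')) ∩ K).Nonempty := by
  have hKu : K.erase u ⊆ s.erase u := erase_subset_erase _ hK
  have hmaps : Set.MapsTo (F u) ↑(K.erase u) ↑((range w).erase k) := fun v hv => by
    refine mem_erase.mpr ⟨fun hvk => disjoint_left.mp hk ?_ (mem_of_mem_erase hv),
      mem_range.mpr ((hF u u.2).1 v (hKu hv))⟩
    exact mem_filter.mpr ⟨hKu hv, hvk⟩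
  obtain ⟨v, hvK, hvk⟩ := surjOn_of_injOn_of_card_le (F u) hmaps
    ((hF u u.2).injOn hKu (hKc.subset (coe_subset.mpr (erase_subset _ _))))
    (by simp [card_erase_of_mem hu, hKw])
    (mem_erase.mpr ⟨fun h => hkk' (Fin.ext h).symm, mem_range.mpr k'.isLt⟩)
  exact ⟨v, mem_inter.mpr ⟨mem_filter.mpr ⟨hKu hvK, hvk⟩, mem_of_mem_erase hvK⟩⟩

lemma cliqueFamily_inter_nonempty (hS₀ : G.IsClique ↑S₀)
    (hF : ∀ u ∈ S₀, IsColoringOn Gᶜ (s.erase u) w (F u)) (hK : K ⊆ s) (hKc : Gᶜ.IsClique ↑K)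
    (hKw : #K = w) {i j : Option (S₀ × Fin w)} (hij : i ≠ j)
    (hi : Disjoint (cliqueFamily S₀ s w F i) K) : (cliqueFamily S₀ s w F j ∩ K).Nonempty := by
  have hS₀K (u u' : S₀) (hu : ↑u ∈ K) (hu' : ↑u' ∈ K) : u = u' :=
    Subtype.ext (card_le_one.mp (card_inter_le_one_of_isClique_compl hS₀ hKc) _
      (mem_inter.mpr ⟨u.2, hu⟩) _ (mem_inter.mpr ⟨u'.2, hu'⟩))
  have hmem (u : S₀) (k : Fin w) (hk : Disjoint (cliqueFamily S₀ s w F (some (u, k))) K) :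
      ↑u ∈ K := by
    by_contra hu
    exact not_disjoint_iff_nonempty_inter.mpr
      (cliqueFamily_inter_nonempty_of_notMem hF hK hKc hKw hu k) hk
  rcases i with _ | ⟨u, k⟩ <;> rcases j with _ | ⟨u', k'⟩
  · exact absurd rfl hij
  · exact cliqueFamily_inter_nonempty_of_notMem hF hK hKc hKw
      (fun hu' => disjoint_left.mp hi u'.2 hu') k'
  · exact ⟨u, mem_inter.mpr ⟨u.2, hmem u k hi⟩⟩
  · by_cases huu' : u = u'
    · subst huu'
      exact cliqueFamily_inter_nonempty_of_mem hF hK hKc hKw (hmem u k hi)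
        (fun hkk' => hij (hkk' ▸ rfl)) hi
    · exact cliqueFamily_inter_nonempty_of_notMem hF hK hKc hKw
        (fun hu' => huu' (hS₀K u u' (hmem u k hi) hu')) k'

theorem cliqueNumOn_mul_cliqueNumOn_compl_lt_card (hbad : ¬ ColorableOn Gᶜ s (cliqueNumOn Gᶜ s))
    (hmin : ∀ t ⊂ s, ColorableOn Gᶜ t (cliqueNumOn Gᶜ t)) :
    cliqueNumOn G s * cliqueNumOn Gᶜ s < #s := by
  set w := cliqueNumOn Gᶜ s
  have hs : s.Nonempty := nonempty_iff_ne_empty.mpr fun h => hbad (h ▸ colorableOn_empty)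
  obtain ⟨S₀, hS₀s, hS₀, hS₀card⟩ := exists_isMaxCliqueOn G s
  have hcol (u : α) (hu : u ∈ S₀) : ColorableOn Gᶜ (s.erase u) w :=
    (hmin _ (erase_ssubset (hS₀s hu))).mono subset_rfl (cliqueNumOn_mono (erase_subset _ _))
  choose! F hF using hcol
  choose B hB hAB using fun i => exists_isMaxCliqueOn_compl_disjoint hbad hmin
    (cliqueFamily_subset (w := w) (F := F) hS₀s i) (isClique_cliqueFamily hS₀ hF i)
  have : Nonempty S₀ := (card_pos.mp (hS₀card ▸ cliqueNumOn_pos hs)).to_subtype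
  have : NeZero w := ⟨(cliqueNumOn_pos hs).ne'⟩
  have hcard := card_le_card_of_card_inter_eq_ite s (cliqueFamily S₀ s w F) B
    (cliqueFamily_subset hS₀s) fun i j => by
      split_ifs with hij
      · exact card_eq_zero.mpr (disjoint_iff_inter_eq_empty.mp (hij ▸ hAB i))
      · obtain ⟨-, hBc, hBw⟩ := hB j
        exact le_antisymm (card_inter_le_one_of_isClique_compl (isClique_cliqueFamily hS₀ hF i) hBc)
          (card_pos.mpr (cliqueFamily_inter_nonempty hS₀ hF (hB j).1 hBc hBw (Ne.symm hij) (hAB j)))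
  simpa [hS₀card] using hcard

end Gasparian

theorem colorableOn_compl {α : Type} [DecidableEq α] {G : SimpleGraph α}
    (hG : ∀ s, ColorableOn G s (cliqueNumOn G s)) (s : Finset α) :
    ColorableOn Gᶜ s (cliqueNumOn Gᶜ s) := by
  induction s using Finset.strongInduction with
  | H s ih =>
    by_contra hbad
    obtain ⟨f, hf⟩ := hG s
    exact (cliqueNumOn_mul_cliqueNumOn_compl_lt_card hbad ih).not_ge hf.card_le_mul

theorem qp_of_colorableOn {α : Type} [DecidableEq α] {G : SimpleGraph α}
    (hG : ∀ s, ColorableOn G s (cliqueNumOn G s)) (s : Finset α) : QP G s := by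
  induction s using Finset.strongInduction with
  | H s ih =>
    rcases s.eq_empty_or_nonempty with rfl | hs
    · exact QP.empty
    obtain ⟨PI, hPI⟩ := (hG s).exists_isPrimeIndepOn hs
    obtain ⟨PK, hPK⟩ := (colorableOn_compl hG s).exists_isPrimeIndepOn hs
    have hPK' := hPK
    simp only [IsPrimeIndepOn, isMaxCliqueOn_compl_iff, isIndepSet_compl] at hPK'
    exact QP.step s PI PK hs hPI.1 hPI.2.1 hPI.2.2.1 hPI.2.2.2
      hPK'.1 hPK'.2.1 hPK'.2.2.1 hPK'.2.2.2
      (ih _ (sdiff_ssubset hPI.1 hPI.nonempty)) (ih _ (sdiff_ssubset hPK.1 hPK.nonempty))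

theorem stmt_9 (G : SimpleGraph V) (h : Perfect' G) : Quasiperfect G :=
  qp_of_colorableOn h.colorableOn univ
end

section
/- Let n ≥ 5 be odd, n = 2m+1, and let G be C_n together with vertices w_1,…,w_n where w_i is adjacent exactly to v_i and v_{i+1} (indices mod n). Then the set {w_n, v_2, v_4, …, v_{2m}} is an independent set of G intersecting every maximum clique, and each vertex of this set lies in some maximum clique. -/
open SimpleGraph Finset

variable {V : Type} [Fintype V] [DecidableEq V]

/-- The cycle `C_n` on vertices `0, …, n-1`, `i` adjacent to `i+1 (mod n)`. -/
def cyc (n : ℕ) : SimpleGraph (Fin n) :=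
  SimpleGraph.fromRel (fun i j => j.val = (i.val + 1) % n)

/-- `C_n` together with one extra vertex `w` adjacent exactly to the two
consecutive cycle vertices `k` and `k+1 (mod n)`. -/
def cycPlus (n : ℕ) (k : Fin n) : SimpleGraph (Fin n ⊕ Unit) :=
  SimpleGraph.fromRel (fun a b => match a, b with
    | Sum.inl i, Sum.inl j => j.val = (i.val + 1) % n
    | Sum.inr _, Sum.inl j => j = k ∨ j.val = (k.val + 1) % n
    | _, _ => False)

/-- `C_n` together with, for each edge `{v_i, v_{i+1}}`, a new vertex `w_i`
(coded `Sum.inr i`) adjacent exactly to `v_i` and `v_{i+1}`. -/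
def cycAll (n : ℕ) : SimpleGraph (Fin n ⊕ Fin n) :=
  SimpleGraph.fromRel (fun a b => match a, b with
    | Sum.inl i, Sum.inl j => j.val = (i.val + 1) % n
    | Sum.inr i, Sum.inl j => j = i ∨ j.val = (i.val + 1) % n
    | _, _ => False)

/-!
For `n ≥ 4` the cycle `C_n` is triangle-free, so a triangle of `cycAll n` must contain some `w_i`,
and then it is `{w_i, v_i, v_{i+1}}`; these are the maximum cliques. For odd `n` the vertices
`v_j` with `j` odd (0-indexed) are pairwise non-adjacent, since the only wrap-around edge joins
`v_{n-1}` and `v_0`, both of even index; `w_{n-1}` is joined only to these two. A triangle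
`{w_i, v_i, v_{i+1}}` with `i` even meets the set in `v_{i+1}`, unless `i = n - 1`, where it
meets it in `w_{n-1}`.
-/

variable {n : ℕ}

def Fin.cycSucc (i : Fin n) : Fin n := ⟨(i.val + 1) % n, Nat.mod_lt _ i.pos⟩

lemma Fin.val_cycSucc (i : Fin n) :
    (i.cycSucc).val = if i.val + 1 = n then 0 else i.val + 1 := by
  have := i.isLt
  split_ifs with h
  · simp [Fin.cycSucc, h]
  · exact Nat.mod_eq_of_lt (by omega)

lemma Fin.cycSucc_ne_self (hn : 2 ≤ n) (i : Fin n) : i.cycSucc ≠ i := by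
  rw [Ne, Fin.ext_iff, Fin.val_cycSucc]
  split_ifs <;> omega

lemma Fin.not_cycSucc_triangle (hn : 4 ≤ n) {a b c : Fin n}
    (h₁ : b = a.cycSucc ∨ a = b.cycSucc) (h₂ : c = a.cycSucc ∨ a = c.cycSucc)
    (h₃ : c = b.cycSucc ∨ b = c.cycSucc) : False := by
  simp only [Fin.ext_iff, Fin.val_cycSucc] at h₁ h₂ h₃
  have := a.isLt; have := b.isLt; have := c.isLt
  split_ifs at h₁ h₂ h₃ <;> omega

namespace cycAll

lemma adj_inl_inl (hn : 2 ≤ n) (a b : Fin n) :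
    (cycAll n).Adj (.inl a) (.inl b) ↔ b = a.cycSucc ∨ a = b.cycSucc := by
  have := Fin.cycSucc_ne_self hn a
  have := Fin.cycSucc_ne_self hn b
  simp only [cycAll, Fin.ext_iff, Fin.cycSucc, fromRel_adj, ne_eq, Sum.inl.injEq] at *
  omega

lemma adj_inr_inl (i j : Fin n) : (cycAll n).Adj (.inr i) (.inl j) ↔ j = i ∨ j = i.cycSucc := by
  simp [cycAll, Fin.ext_iff, Fin.cycSucc]

lemma not_adj_inr_inr (i j : Fin n) : ¬ (cycAll n).Adj (.inr i) (.inr j) := by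
  simp [cycAll]

def triangle (i : Fin n) : Finset (Fin n ⊕ Fin n) := {.inr i, .inl i, .inl i.cycSucc}

lemma isNClique_triangle (hn : 2 ≤ n) (i : Fin n) : (cycAll n).IsNClique 3 (triangle i) :=
  is3Clique_triple_iff.mpr ⟨(adj_inr_inl i i).mpr (.inl rfl), (adj_inr_inl i _).mpr (.inr rfl),
    (adj_inl_inl hn i _).mpr (.inl rfl)⟩

lemma subset_triangle_of_isClique {t : Finset (Fin n ⊕ Fin n)} (ht : (cycAll n).IsClique ↑t)
    {i : Fin n} (hi : .inr i ∈ t) : t ⊆ triangle i := by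
  intro x hx
  obtain rfl | hxi := eq_or_ne x (.inr i)
  · simp [triangle]
  have hadj := ht hi hx hxi.symm
  cases x with
  | inr j => exact absurd hadj (not_adj_inr_inr i j)
  | inl j => rcases (adj_inr_inl i j).mp hadj with rfl | rfl <;> simp [triangle]

lemma card_le_two_of_isClique_of_forall_inr_notMem (hn : 4 ≤ n) {t : Finset (Fin n ⊕ Fin n)}
    (ht : (cycAll n).IsClique ↑t) (hw : ∀ i, .inr i ∉ t) : t.card ≤ 2 := by
  by_contra! hcard
  obtain ⟨u, hut, hu⟩ := exists_subset_card_eq hcard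
  obtain ⟨a, b, c, hab, hac, hbc, rfl⟩ :=
    is3Clique_iff.mp ⟨ht.subset (coe_subset.mpr hut), hu⟩
  have hinl : ∀ x ∈ ({a, b, c} : Finset _), ∃ y, x = .inl y := fun x hx => by
    cases x with
    | inl y => exact ⟨y, rfl⟩
    | inr y => exact absurd (hut hx) (hw y)
  obtain ⟨a, rfl⟩ := hinl a (by simp)
  obtain ⟨b, rfl⟩ := hinl b (by simp)
  obtain ⟨c, rfl⟩ := hinl c (by simp)
  rw [adj_inl_inl (by omega)] at hab hac hbc
  exact Fin.not_cycSucc_triangle hn hab hac hbc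

lemma card_le_two_or_subset_triangle (hn : 4 ≤ n) {t : Finset (Fin n ⊕ Fin n)}
    (ht : (cycAll n).IsClique ↑t) : t.card ≤ 2 ∨ ∃ i, t ⊆ triangle i := by
  by_cases hw : ∃ i, .inr i ∈ t
  · obtain ⟨i, hi⟩ := hw
    exact .inr ⟨i, subset_triangle_of_isClique ht hi⟩
  · exact .inl (card_le_two_of_isClique_of_forall_inr_notMem hn ht (by simpa using hw))

lemma card_le_three_of_isClique (hn : 4 ≤ n) {t : Finset (Fin n ⊕ Fin n)}
    (ht : (cycAll n).IsClique ↑t) : t.card ≤ 3 := by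
  obtain h | ⟨i, hi⟩ := card_le_two_or_subset_triangle hn ht
  · omega
  · exact (card_le_card hi).trans (isNClique_triangle (by omega) i).card_eq.le

lemma cliqueNumOn_univ (hn : 4 ≤ n) : cliqueNumOn (cycAll n) univ = 3 := by
  refine le_antisymm (csSup_le ⟨0, ∅, by simp⟩ ?bound) (le_csSup ⟨3, ?bound⟩ ?_)
  · rintro k ⟨t, -, ht, rfl⟩
    exact card_le_three_of_isClique hn ht
  · have h := isNClique_triangle (by omega) (⟨0, by omega⟩ : Fin n)
    exact ⟨_, subset_univ _, h.isClique, h.card_eq⟩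

lemma isMaxCliqueOn_univ_iff (hn : 4 ≤ n) (t : Finset (Fin n ⊕ Fin n)) :
    IsMaxCliqueOn (cycAll n) univ t ↔ ∃ i, t = triangle i := by
  rw [IsMaxCliqueOn, cliqueNumOn_univ hn]
  constructor
  · rintro ⟨-, ht, hcard⟩
    obtain h | ⟨i, hi⟩ := card_le_two_or_subset_triangle hn ht
    · omega
    · refine ⟨i, eq_of_subset_of_card_le hi ?_⟩
      rw [(isNClique_triangle (by omega) i).card_eq, hcard]
  · rintro ⟨i, rfl⟩
    have h := isNClique_triangle (by omega) i
    exact ⟨subset_univ _, h.isClique, h.card_eq⟩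

/-- For odd `n` and `l = n - 1` this is the paper's `{w_n, v_2, v_4, …, v_{n-1}}`, whose
indices are `1`-based. -/
def oddTransversal (l : Fin n) : Finset (Fin n ⊕ Fin n) :=
  insert (.inr l) ((univ.filter fun j : Fin n => j.val % 2 = 1).image .inl)

lemma mem_oddTransversal {l : Fin n} {x : Fin n ⊕ Fin n} :
    x ∈ oddTransversal l ↔ x = .inr l ∨ ∃ j : Fin n, j.val % 2 = 1 ∧ x = .inl j := by
  simp [oddTransversal, eq_comm]

variable {l : Fin n}

lemma isIndepSet_oddTransversal (hodd : n % 2 = 1) (hl : l.val + 1 = n) :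
    IsIndepSet' (cycAll n) ↑(oddTransversal l) := by
  have hw : ∀ j : Fin n, j.val % 2 = 1 → ¬ (cycAll n).Adj (.inr l) (.inl j) := by
    intro j hj hadj
    rcases (adj_inr_inl l j).mp hadj with rfl | rfl
    · omega
    · simp [Fin.val_cycSucc, hl] at hj
  intro x hx y hy hxy hadj
  rcases mem_oddTransversal.mp hx with rfl | ⟨j, hj, rfl⟩ <;>
    rcases mem_oddTransversal.mp hy with rfl | ⟨k, hk, rfl⟩
  · exact hxy rfl
  · exact hw k hk hadj
  · exact hw j hj hadj.symm
  · have := j.isLt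
    obtain h | h := (adj_inl_inl (by omega) j k).mp hadj <;>
      · simp only [Fin.ext_iff, Fin.val_cycSucc] at h
        split_ifs at h <;> omega

lemma oddTransversal_inter_triangle_nonempty (hodd : n % 2 = 1) (hl : l.val + 1 = n)
    (i : Fin n) : (oddTransversal l ∩ triangle i).Nonempty := by
  by_cases hi : i.val % 2 = 1
  · exact ⟨.inl i, mem_inter.mpr
      ⟨mem_oddTransversal.mpr (.inr ⟨i, hi, rfl⟩), by simp [triangle]⟩⟩
  by_cases hil : i = l
  · exact ⟨.inr i, mem_inter.mpr
      ⟨mem_oddTransversal.mpr (.inl (hil ▸ rfl)), by simp [triangle]⟩⟩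
  have hsucc : i.cycSucc.val % 2 = 1 := by
    have := Fin.val_ne_of_ne hil
    rw [Fin.val_cycSucc]
    split_ifs <;> omega
  exact ⟨.inl i.cycSucc,
    mem_inter.mpr ⟨mem_oddTransversal.mpr (.inr ⟨_, hsucc, rfl⟩), by simp [triangle]⟩⟩

lemma exists_triangle_mem_of_mem_oddTransversal {x : Fin n ⊕ Fin n}
    (hx : x ∈ oddTransversal l) : ∃ i, x ∈ triangle i := by
  rcases mem_oddTransversal.mp hx with rfl | ⟨j, -, rfl⟩
  · exact ⟨l, by simp [triangle]⟩
  · exact ⟨j, by simp [triangle]⟩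

end cycAll

open cycAll in
theorem stmt_12 (n m : ℕ) (hm : n = 2 * m + 1) (hn : 5 ≤ n)
    (S : Finset (Fin n ⊕ Fin n))
    (hS : S = insert (Sum.inr ⟨n - 1, by omega⟩)
      ((Finset.univ.filter fun j : Fin n => j.val % 2 = 1).image Sum.inl)) :
    IsIndepSet' (cycAll n) ↑S ∧
      (∀ t, IsMaxCliqueOn (cycAll n) Finset.univ t → (S ∩ t).Nonempty) ∧
      ∀ v ∈ S, ∃ t, IsMaxCliqueOn (cycAll n) Finset.univ t ∧ v ∈ t := by
  have hodd : n % 2 = 1 := by omega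
  have hl : (n - 1) + 1 = n := by omega
  change S = oddTransversal _ at hS
  subst hS
  refine ⟨isIndepSet_oddTransversal hodd hl, fun t ht => ?_, fun v hv => ?_⟩
  · obtain ⟨i, rfl⟩ := (isMaxCliqueOn_univ_iff (by omega) t).mp ht
    exact oddTransversal_inter_triangle_nonempty hodd hl i
  · obtain ⟨i, hi⟩ := exists_triangle_mem_of_mem_oddTransversal hv
    exact ⟨triangle i, (isMaxCliqueOn_univ_iff (by omega) _).mpr ⟨i, rfl⟩, hi⟩
end

section
/- Let K be a clique of a finite graph G such that K intersects every maximum independent set and every vertex of K lies in some maximum independent set. Then α(G[V−K]) = α(G) − 1 (assuming α(G) ≥ 1). -/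
open SimpleGraph Finset

variable {V : Type} [Fintype V] [DecidableEq V]

lemma indep_bdd (G : SimpleGraph V) (s : Finset V) :
    BddAbove {n | ∃ t : Finset V, t ⊆ s ∧ IsIndepSet' G ↑t ∧ t.card = n} := by
  refine ⟨Fintype.card V, ?_⟩
  rintro n ⟨t, -, -, rfl⟩
  exact le_trans t.card_le_univ (le_of_eq Finset.card_univ)

lemma indep_zero_mem (G : SimpleGraph V) (s : Finset V) :
    (0:ℕ) ∈ {n | ∃ t : Finset V, t ⊆ s ∧ IsIndepSet' G ↑t ∧ t.card = n} :=
  ⟨∅, by simp [IsIndepSet']⟩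

theorem stmt_16 (G : SimpleGraph V) (K : Finset V) (hclq : G.IsClique ↑K)
    (hint : ∀ t, IsMaxIndepOn G Finset.univ t → (K ∩ t).Nonempty)
    (hcov : ∀ v ∈ K, ∃ t, IsMaxIndepOn G Finset.univ t ∧ v ∈ t)
    (hα : 1 ≤ indepNumOn G Finset.univ) :
    indepNumOn G (Finset.univ \ K) = indepNumOn G Finset.univ - 1 := by
  classical
  set α := indepNumOn G Finset.univ with hαdef
  obtain ⟨t, hts, hti, htc⟩ :=
    Nat.sSup_mem ⟨0, indep_zero_mem G Finset.univ⟩ (indep_bdd G Finset.univ)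
  have hmax : IsMaxIndepOn G Finset.univ t := ⟨hts, hti, htc⟩
  have hc1 : ∀ u : Finset V, IsIndepSet' G ↑u → (K ∩ u).card ≤ 1 := by
    intro u hu
    by_contra h
    push_neg at h
    obtain ⟨a, ha, b, hb, hab⟩ := Finset.one_lt_card.mp h
    rw [Finset.mem_inter] at ha hb
    exact hu (Finset.mem_coe.mpr ha.2) (Finset.mem_coe.mpr hb.2) hab
      (hclq (Finset.mem_coe.mpr ha.1) (Finset.mem_coe.mpr hb.1) hab)
  -- lower bound
  have hcard1 : (K ∩ t).card = 1 :=
    le_antisymm (hc1 t hti) (Finset.card_pos.mpr (hint t hmax))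
  have htcα : t.card = α := htc
  have hsd : (t \ K).card = α - 1 := by
    have := Finset.card_inter_add_card_sdiff t K
    rw [Finset.inter_comm] at hcard1
    omega
  have hlow : α - 1 ≤ indepNumOn G (Finset.univ \ K) := by
    apply le_csSup (indep_bdd G _)
    refine ⟨t \ K, ?_, ?_, hsd⟩
    · exact Finset.sdiff_subset_sdiff hts le_rfl
    · exact hti.mono (by rw [Finset.coe_sdiff]; exact Set.diff_subset)
  -- upper bound
  have hup : indepNumOn G (Finset.univ \ K) ≤ α - 1 := by
    apply csSup_le ⟨0, indep_zero_mem G _⟩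
    rintro n ⟨u, hus, hui, rfl⟩
    have hle : u.card ≤ α :=
      le_csSup (indep_bdd G Finset.univ) ⟨u, Finset.subset_univ u, hui, rfl⟩
    rcases eq_or_lt_of_le hle with heq | hlt
    · exfalso
      obtain ⟨a, ha⟩ := hint u ⟨Finset.subset_univ u, hui, heq⟩
      rw [Finset.mem_inter] at ha
      have := hus ha.2
      rw [Finset.mem_sdiff] at this
      exact this.2 ha.1
    · omega
  omega
end
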